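/- arXiv:math/0501305 — 3 statements merged into one kernel-verified Lean document; each statement's English description precedes it below -/
import Mathlib

section
/- The circle S¹ does not admit a 2-mean: there is no continuous map r : S¹ × S¹ → S¹ such that r(x,y) = r(y,x) for all x,y ∈ S¹ and r(x,x) = x for all x ∈ S¹. -/
/-!
Lift `(s, t) ↦ r (exp s, exp t)` through the covering `Circle.exp : ℝ → S¹` to a continuous
`F : ℝ × ℝ → ℝ`. Two lifts of the same map differ by a constant in `2πℤ`. Hence symmetry of `r`
makes `F` symmetric, and shifting either variable by `2π` adds the same constant `2πa`, so
`F (2π, 2π) = F (0, 0) + 4πa`. On the other hand `r (x, x) = x` makes `s ↦ F (s, s) - s`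
constant, so `F (2π, 2π) = F (0, 0) + 2π`, and `2a = 1` has no integer solution.
-/

open Real

theorem Circle.exists_int_forall_eq_add_of_exp_eq {X : Type*} [TopologicalSpace X]
    [PreconnectedSpace X] {f g : X → ℝ} (hf : Continuous f) (hg : Continuous g)
    (h : ∀ x, exp (f x) = exp (g x)) : ∃ m : ℤ, ∀ x, f x = g x + m * (2 * π) := by
  cases isEmpty_or_nonempty X with
  | inl _ => exact ⟨0, isEmptyElim⟩
  | inr hX =>
    obtain ⟨x₀⟩ := hX
    obtain ⟨m, hm⟩ := exp_eq_exp.1 (h x₀)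
    refine ⟨m, congrFun (isCoveringMap_exp.eq_of_comp_eq hf (by fun_prop) ?_ x₀ hm)⟩
    funext x
    simp [h, exp_add]

theorem Circle.exists_continuous_lift {A : Type*} [TopologicalSpace A] [SimplyConnectedSpace A]
    [LocallyPathConnectedSpace A] {f : A → Circle} (hf : Continuous f) :
    ∃ F : A → ℝ, Continuous F ∧ ∀ a, exp (F a) = f a := by
  obtain ⟨a₀⟩ := PathConnectedSpace.nonempty (X := A)
  obtain ⟨e₀, he₀⟩ := exp_surjective (f a₀)
  obtain ⟨F, -, hF⟩ := (isCoveringMap_exp.existsUnique_continuousMap_lifts ⟨f, hf⟩ a₀ e₀ he₀).exists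
  exact ⟨F, F.continuous, congrFun hF⟩

namespace TwoMeanLift

variable {r : Circle × Circle → Circle} {F : ℝ × ℝ → ℝ} (hF : Continuous F)
  (hlift : ∀ p : ℝ × ℝ, Circle.exp (F p) = r (Circle.exp p.1, Circle.exp p.2))
include hF hlift

theorem apply_swap (hsymm : ∀ x y, r (x, y) = r (y, x)) (s t : ℝ) : F (s, t) = F (t, s) := by
  obtain ⟨m, hm⟩ := Circle.exists_int_forall_eq_add_of_exp_eq hF (hF.comp continuous_swap)
    fun p ↦ by simp only [Function.comp_apply, hlift, Prod.fst_swap, Prod.snd_swap, hsymm]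
  have hm0 : m = 0 := by simpa [pi_ne_zero] using hm (0, 0)
  simpa [hm0] using hm (s, t)

theorem exists_apply_add_two_pi_left :
    ∃ a : ℤ, ∀ s t : ℝ, F (s + 2 * π, t) = F (s, t) + a * (2 * π) :=
  have hshift : Continuous fun p : ℝ × ℝ ↦ F (p.1 + 2 * π, p.2) := by fun_prop
  (Circle.exists_int_forall_eq_add_of_exp_eq hshift hF fun p ↦ by
    simp only [hlift, Circle.exp_add_two_pi]).imp fun _ ha s t ↦ ha (s, t)

theorem apply_two_pi_two_pi (hdiag : ∀ x, r (x, x) = x) :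
    F (2 * π, 2 * π) = F (0, 0) + 2 * π := by
  obtain ⟨m, hm⟩ := Circle.exists_int_forall_eq_add_of_exp_eq (f := fun s ↦ F (s, s))
    (g := fun s ↦ s) (by fun_prop) continuous_id fun s ↦ by simp only [hlift, hdiag]
  linarith [hm 0, hm (2 * π)]

end TwoMeanLift

open TwoMeanLift in
/-- Aumann's theorem: the circle `S¹` does not admit a 2-mean, i.e. there is no
continuous map `r : S¹ × S¹ → S¹` which is symmetric and restricts to the
identity on the diagonal. -/
theorem circle_has_no_two_mean :
    ¬ ∃ r : Circle × Circle → Circle,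
      Continuous r ∧ (∀ x y : Circle, r (x, y) = r (y, x)) ∧
      (∀ x : Circle, r (x, x) = x) := by
  rintro ⟨r, hr, hsymm, hdiag⟩
  obtain ⟨F, hF, hlift⟩ := Circle.exists_continuous_lift
    (f := fun p : ℝ × ℝ ↦ r (Circle.exp p.1, Circle.exp p.2)) (by fun_prop)
  obtain ⟨a, ha⟩ := exists_apply_add_two_pi_left hF hlift
  have hdouble : F (2 * π, 2 * π) = F (0, 0) + 2 * a * (2 * π) := calc
    F (2 * π, 2 * π) = F (0, 2 * π) + a * (2 * π) := by simpa using ha 0 (2 * π)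
    _ = F (2 * π, 0) + a * (2 * π) := by rw [apply_swap hF hlift hsymm]
    _ = F (0, 0) + 2 * a * (2 * π) := by linarith [zero_add (2 * π) ▸ ha 0 0]
  have hcancel : (2 * a : ℝ) * (2 * π) = 1 * (2 * π) := by
    linarith [apply_two_pi_two_pi hF hlift hdiag]
  have h2a : (2 * a : ℤ) = 1 := by exact_mod_cast mul_right_cancel₀ two_pi_pos.ne' hcancel
  omega
end

section
/- If r : S¹ × S¹ → S¹ is continuous with r(x,x) = x for all x ∈ S¹, then r is not constant on the set ({1} × S¹) ∪ (S¹ × {1}). -/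
open Complex Real

/-- Discrete "angle increment" from `z` to `w` on the circle. -/
noncomputable def cA (z w : Circle) : ℝ := Complex.arg ((w / z : Circle) : ℂ)

lemma cA_exp (z w : Circle) : Circle.exp (cA z w) = w / z :=
  Circle.exp_arg (w / z)

lemma cA_self (z : Circle) : cA z z = 0 := by
  simp [cA]

lemma abs_cA_lt {z w : Circle} (h : dist (z : ℂ) (w : ℂ) < 1) : |cA z w| < π / 2 := by
  have hz : (z : ℂ) ≠ 0 := z.coe_ne_zero
  have key : ((w / z : Circle) : ℂ) - 1 = ((w : ℂ) - z) / z := by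
    push_cast; field_simp
  have habs : ‖1 - ((w / z : Circle) : ℂ)‖ < 1 := by
    rw [← Complex.dist_eq, dist_comm, Complex.dist_eq, key, norm_div, Circle.norm_coe, div_one,
      ← Complex.dist_eq, dist_comm]
    exact h
  rw [cA, Complex.abs_arg_lt_pi_div_two_iff]
  left
  have hre := Complex.re_le_norm (1 - ((w / z : Circle) : ℂ))
  simp only [Complex.sub_re, Complex.one_re] at hre
  linarith

lemma cA_triangle {z w u : Circle} (h1 : dist (z : ℂ) (w : ℂ) < 1)
    (h2 : dist (w : ℂ) (u : ℂ) < 1) (h3 : dist (z : ℂ) (u : ℂ) < 1) :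
    cA z w + cA w u = cA z u := by
  have he : Circle.exp (cA z w + cA w u - cA z u) = 1 := by
    rw [Circle.exp_sub, Circle.exp_add, cA_exp, cA_exp, cA_exp]
    apply Circle.coe_injective
    push_cast
    have hz := z.coe_ne_zero
    have hw := w.coe_ne_zero
    have hu := u.coe_ne_zero
    field_simp
  obtain ⟨m, hm⟩ := Circle.exp_eq_one.mp he
  have b1 := abs_cA_lt h1
  have b2 := abs_cA_lt h2
  have b3 := abs_cA_lt h3
  have hπ := Real.pi_pos
  rw [abs_lt] at b1 b2 b3
  have hm1 : -1 < (m : ℝ) := by nlinarith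
  have hm2 : (m : ℝ) < 1 := by nlinarith
  have hm1' : -1 < m := by exact_mod_cast hm1
  have hm2' : m < 1 := by exact_mod_cast hm2
  have hm0 : m = 0 := by omega
  rw [hm0] at hm
  simp at hm
  linarith

/-- If `r : S¹ × S¹ → S¹` is continuous and restricts to the identity on the
diagonal, then `r` is not constant on the wedge of the two coordinate circles
`({1} × S¹) ∪ (S¹ × {1})` in the torus. -/
theorem not_constant_on_wedge (r : Circle × Circle → Circle)
    (hr : Continuous r) (hdiag : ∀ x : Circle, r (x, x) = x) :
    ¬ ∃ c : Circle, ∀ x : Circle, r (x, 1) = c ∧ r (1, x) = c := by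
  rintro ⟨c, hc⟩
  have hπ := Real.pi_pos
  -- uniform continuity on a compact square
  have hg : Continuous (fun p : ℝ × ℝ => r (Circle.exp p.1, Circle.exp p.2)) :=
    hr.comp ((Circle.exp.continuous.comp continuous_fst).prodMk
      (Circle.exp.continuous.comp continuous_snd))
  have hKc : IsCompact ((Set.Icc (0:ℝ) (2*π)) ×ˢ (Set.Icc (0:ℝ) (2*π))) :=
    isCompact_Icc.prod isCompact_Icc
  have huc := hKc.uniformContinuousOn_of_continuous hg.continuousOn
  obtain ⟨δ, hδ0, hδ⟩ := Metric.uniformContinuousOn_iff.mp huc 1 one_pos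
  obtain ⟨n, hn⟩ := exists_nat_gt (max 2 (2 * π / δ))
  have hn2 : 2 ≤ n := by
    have h2n : (2:ℝ) < n := lt_of_le_of_lt (le_max_left _ _) hn
    exact_mod_cast h2n.le
  have hn0 : (0:ℝ) < n := by positivity
  have hnδ : 2 * π / n < δ := by
    rw [div_lt_iff₀ hn0]
    have h1 : 2 * π / δ < n := lt_of_le_of_lt (le_max_right _ _) hn
    calc 2 * π = 2 * π / δ * δ := (div_mul_cancel₀ _ hδ0.ne').symm
    _ < n * δ := mul_lt_mul_of_pos_right h1 hδ0
    _ = δ * n := mul_comm _ _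
  -- the grid
  set θ : ℕ → ℝ := fun i => 2 * π * ((min i n : ℕ) : ℝ) / n with hθdef
  set z : ℕ → ℕ → Circle := fun i j => r (Circle.exp (θ i), Circle.exp (θ j)) with hzdef
  have hθmem : ∀ i, θ i ∈ Set.Icc (0:ℝ) (2*π) := by
    intro i
    constructor
    · have : (0:ℝ) ≤ ((min i n : ℕ) : ℝ) := Nat.cast_nonneg _
      rw [hθdef]
      positivity
    · rw [hθdef]
      simp only
      rw [div_le_iff₀ hn0]
      have : ((min i n : ℕ) : ℝ) ≤ (n : ℝ) := Nat.cast_le.mpr (min_le_right i n)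
      nlinarith
  have hθstep : ∀ i, θ i ≤ θ (i+1) ∧ θ (i+1) - θ i ≤ 2 * π / n := by
    intro i
    have h1' : ((min i n : ℕ) : ℝ) ≤ ((min (i+1) n : ℕ) : ℝ) :=
      Nat.cast_le.mpr (by omega)
    have h2' : ((min (i+1) n : ℕ) : ℝ) ≤ ((min i n : ℕ) : ℝ) + 1 := by
      have : ((min (i+1) n : ℕ) : ℝ) ≤ ((min i n + 1 : ℕ) : ℝ) := Nat.cast_le.mpr (by omega)
      rwa [Nat.cast_add, Nat.cast_one] at this
    have key : θ (i+1) - θ i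
        = 2 * π * (((min (i+1) n : ℕ) : ℝ) - ((min i n : ℕ) : ℝ)) / n := by
      rw [hθdef]
      ring
    constructor
    · have h0 : (0:ℝ) ≤ 2 * π * (((min (i+1) n : ℕ) : ℝ) - ((min i n : ℕ) : ℝ)) / n :=
        div_nonneg (by nlinarith) hn0.le
      linarith [key ▸ h0]
    · have hΔ1 : ((min (i+1) n : ℕ) : ℝ) - ((min i n : ℕ) : ℝ) ≤ 1 := by linarith
      have hnum : 2 * π * (((min (i+1) n : ℕ) : ℝ) - ((min i n : ℕ) : ℝ)) ≤ 2 * π := by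
        have := mul_le_mul_of_nonneg_left hΔ1 (by positivity : (0:ℝ) ≤ 2 * π)
        linarith
      rw [key, div_le_div_iff₀ hn0 hn0]
      exact mul_le_mul_of_nonneg_right hnum hn0.le
  have hθd : ∀ i k, i ≤ k → k ≤ i+1 → dist (θ i) (θ k) < δ := by
    intro i k hik hki
    have hcase : k = i ∨ k = i + 1 := by omega
    rcases hcase with h | h
    · subst h; simpa using hδ0
    · subst h
      rw [Real.dist_eq, _root_.abs_sub_comm,
        _root_.abs_of_nonneg (by linarith [(hθstep i).1])]
      exact lt_of_le_of_lt (hθstep i).2 hnδ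
  have hclose : ∀ i j k l, i ≤ k → k ≤ i+1 → j ≤ l → l ≤ j+1 →
      dist ((z i j : Circle) : ℂ) ((z k l : Circle) : ℂ) < 1 := by
    intro i j k l hik hki hjl hlj
    have := hδ (θ i, θ j) ⟨hθmem i, hθmem j⟩ (θ k, θ l) ⟨hθmem k, hθmem l⟩
      (by rw [Prod.dist_eq]; exact max_lt (hθd i k hik hki) (hθd j l hjl hlj))
    simp only [hzdef]; exact this
  -- the two basic triangle identities in each grid cell
  have tri1 : ∀ i j, cA (z i j) (z (i+1) j) + cA (z (i+1) j) (z (i+1) (j+1))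
      = cA (z i j) (z (i+1) (j+1)) := fun i j =>
    cA_triangle (hclose i j (i+1) j (by omega) (by omega) (by omega) (by omega))
      (hclose (i+1) j (i+1) (j+1) (by omega) (by omega) (by omega) (by omega))
      (hclose i j (i+1) (j+1) (by omega) (by omega) (by omega) (by omega))
  have tri2 : ∀ i j, cA (z i j) (z i (j+1)) + cA (z i (j+1)) (z (i+1) (j+1))
      = cA (z i j) (z (i+1) (j+1)) := fun i j =>
    cA_triangle (hclose i j i (j+1) (by omega) (by omega) (by omega) (by omega))
      (hclose i (j+1) (i+1) (j+1) (by omega) (by omega) (by omega) (by omega))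
      (hclose i j (i+1) (j+1) (by omega) (by omega) (by omega) (by omega))
  -- rectangle lemma: moving a vertical path one column to the right
  have rect : ∀ i j, (∑ k ∈ Finset.range j, cA (z i k) (z i (k+1))) + cA (z i j) (z (i+1) j)
      = cA (z i 0) (z (i+1) 0) + ∑ k ∈ Finset.range j, cA (z (i+1) k) (z (i+1) (k+1)) := by
    intro i j
    induction j with
    | zero => simp
    | succ j ih =>
      rw [Finset.sum_range_succ, Finset.sum_range_succ]
      have h1 := tri1 i j
      have h2 := tri2 i j
      linarith
  -- the main identity: bottom edge + last column = diagonal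
  have main : ∀ i, (∑ k ∈ Finset.range i, cA (z k 0) (z (k+1) 0))
      + ∑ k ∈ Finset.range i, cA (z i k) (z i (k+1))
      = ∑ k ∈ Finset.range i, cA (z k k) (z (k+1) (k+1)) := by
    intro i
    induction i with
    | zero => simp
    | succ i ih =>
      rw [Finset.sum_range_succ, Finset.sum_range_succ, Finset.sum_range_succ]
      have h1 := tri1 i i
      have h2 := rect i i
      linarith
  -- evaluate at i = n
  have hθ0 : θ 0 = 0 := by simp [hθdef]
  have hθn : θ n = 2 * π := by
    have : θ n = 2 * π * ((min n n : ℕ) : ℝ) / n := by rw [hθdef]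
    rw [this, min_self, mul_div_assoc, div_self hn0.ne', mul_one]
  have hexpn : Circle.exp (θ n) = 1 := by
    rw [hθn]
    have := Circle.exp_add_two_pi 0
    rwa [zero_add, Circle.exp_zero] at this
  have hb : ∀ k, z k 0 = c := by
    intro k
    have : z k 0 = r (Circle.exp (θ k), Circle.exp (θ 0)) := by rw [hzdef]
    rw [this, hθ0, Circle.exp_zero]
    exact (hc (Circle.exp (θ k))).1
  have hrt : ∀ k, z n k = c := by
    intro k
    have : z n k = r (Circle.exp (θ n), Circle.exp (θ k)) := by rw [hzdef]
    rw [this, hexpn]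
    exact (hc (Circle.exp (θ k))).2
  have hbot : (∑ k ∈ Finset.range n, cA (z k 0) (z (k+1) 0)) = 0 := by
    apply Finset.sum_eq_zero
    intro k _
    rw [hb k, hb (k+1), cA_self]
  have hcol : (∑ k ∈ Finset.range n, cA (z n k) (z n (k+1))) = 0 := by
    apply Finset.sum_eq_zero
    intro k _
    rw [hrt k, hrt (k+1), cA_self]
  have hdiagsum : (∑ k ∈ Finset.range n, cA (z k k) (z (k+1) (k+1))) = 2 * π := by
    have hterm : ∀ k ∈ Finset.range n, cA (z k k) (z (k+1) (k+1)) = 2 * π / n := by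
      intro k hk
      rw [Finset.mem_range] at hk
      have hzd : ∀ m, z m m = Circle.exp (θ m) := fun m => hdiag _
      rw [hzd, hzd, cA]
      have hstep : θ (k+1) - θ k = 2 * π / n := by
        have e1 : θ k = 2 * π * ((min k n : ℕ) : ℝ) / n := by rw [hθdef]
        have e2 : θ (k+1) = 2 * π * ((min (k+1) n : ℕ) : ℝ) / n := by rw [hθdef]
        rw [e1, e2, min_eq_left (by omega : k ≤ n), min_eq_left (by omega : k + 1 ≤ n)]
        push_cast
        field_simp
        ring
      have hq : Circle.exp (θ (k+1)) / Circle.exp (θ k) = Circle.exp (2 * π / n) := by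
        rw [← Circle.exp_sub, hstep]
      rw [hq]
      have h1 : -π < 2 * π / n := by
        have : (0:ℝ) < 2 * π / n := by positivity
        linarith
      have h2 : 2 * π / n ≤ π := by
        rw [div_le_iff₀ hn0]
        have : (2:ℝ) ≤ n := by exact_mod_cast hn2
        nlinarith
      exact Circle.arg_exp h1 h2
    rw [Finset.sum_congr rfl hterm, Finset.sum_const, Finset.card_range, nsmul_eq_mul]
    field_simp
  have hfin := main n
  rw [hbot, hcol, hdiagsum] at hfin
  linarith
end

section
/- Define the chain graph on the set of triangles of the standard triangulation of {0,…,k}²: two triangles are adjacent iff they share a common face that is an f-gate for a given coloring f : {0,…,k}² → {−1,1}. Then every triangle has degree at most 2 in this graph. -/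
/-- basic vectors of the triangulation: `e false = (1,0)`, `e true = (0,1)`. -/
def basicVec : Bool → ℤ × ℤ := fun i => if i then (0, 1) else (1, 0)

/-- the vertex set of the simplex determined by base point `z`, orientation `i`. -/
def triVerts (z : ℤ × ℤ) (i : Bool) : Finset (ℤ × ℤ) :=
  {z, z + basicVec i, z + basicVec i + basicVec (!i)}

/-- membership in the grid `{0,…,k}²`. -/
def inGrid (k : ℤ) (p : ℤ × ℤ) : Prop :=
  0 ≤ p.1 ∧ p.1 ≤ k ∧ 0 ≤ p.2 ∧ p.2 ≤ k

/-- valid simplexes of the triangulation of `D²(k)`. -/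
def validTri (k : ℤ) (z : ℤ × ℤ) (i : Bool) : Prop :=
  ∀ p ∈ triVerts z i, inGrid k p

/-- two (valid) simplexes are adjacent in the chain graph of the coloring `f`
iff they are distinct and share a common face which is an `f`-gate. -/
def chainAdj (f : ℤ × ℤ → ℤ) (T T' : (ℤ × ℤ) × Bool) : Prop :=
  T ≠ T' ∧ ∃ s : Finset (ℤ × ℤ), s.card = 2 ∧
    s ⊆ triVerts T.1 T.2 ∧ s ⊆ triVerts T'.1 T'.2 ∧
    (∃ p ∈ s, f p = -1) ∧ (∃ p ∈ s, f p = 1)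

lemma edgeH (z' : ℤ × ℤ) (i' : Bool) (p : ℤ × ℤ)
    (hp : p ∈ triVerts z' i') (hq : p + (1,0) ∈ triVerts z' i') :
    (z', i') = (p, false) ∨ (z', i') = (p - (0,1), true) := by
  obtain ⟨z1, z2⟩ := z'; obtain ⟨p1, p2⟩ := p
  cases i' <;>
    simp [triVerts, basicVec, Prod.ext_iff, Finset.mem_insert, Finset.mem_singleton] at hp hq ⊢ <;>
    omega

lemma edgeV (z' : ℤ × ℤ) (i' : Bool) (p : ℤ × ℤ)
    (hp : p ∈ triVerts z' i') (hq : p + (0,1) ∈ triVerts z' i') :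
    (z', i') = (p, true) ∨ (z', i') = (p - (1,0), false) := by
  obtain ⟨z1, z2⟩ := z'; obtain ⟨p1, p2⟩ := p
  cases i' <;>
    simp [triVerts, basicVec, Prod.ext_iff, Finset.mem_insert, Finset.mem_singleton] at hp hq ⊢ <;>
    omega

lemma edgeD (z' : ℤ × ℤ) (i' : Bool) (p : ℤ × ℤ)
    (hp : p ∈ triVerts z' i') (hq : p + (1,1) ∈ triVerts z' i') :
    (z', i') = (p, false) ∨ (z', i') = (p, true) := by
  obtain ⟨z1, z2⟩ := z'; obtain ⟨p1, p2⟩ := p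
  cases i' <;>
    simp [triVerts, basicVec, Prod.ext_iff, Finset.mem_insert, Finset.mem_singleton] at hp hq ⊢ <;>
    omega

lemma face_cases (z : ℤ × ℤ) (i : Bool) (s : Finset (ℤ × ℤ))
    (hcard : s.card = 2) (hsub : s ⊆ triVerts z i) :
    s = {z, z + basicVec i} ∨
    s = {z + basicVec i, z + basicVec i + basicVec (!i)} ∨
    s = {z, z + basicVec i + basicVec (!i)} := by
  obtain ⟨x, y, hxy, rfl⟩ := Finset.card_eq_two.mp hcard
  have hx : x ∈ triVerts z i := hsub (by simp)
  have hy : y ∈ triVerts z i := hsub (by simp)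
  simp only [triVerts, Finset.mem_insert, Finset.mem_singleton] at hx hy
  rcases hx with rfl | rfl | rfl <;> rcases hy with rfl | rfl | rfl <;>
    first
    | exact absurd rfl hxy
    | tauto
    | (rw [Finset.pair_comm]; tauto)

lemma gate_ne {f : ℤ × ℤ → ℤ} {x y : ℤ × ℤ}
    (hneg : ∃ p ∈ ({x, y} : Finset (ℤ × ℤ)), f p = -1)
    (hpos : ∃ p ∈ ({x, y} : Finset (ℤ × ℤ)), f p = 1) : f x ≠ f y := by
  obtain ⟨p, hp, hp'⟩ := hneg; obtain ⟨q, hq, hq'⟩ := hpos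
  simp only [Finset.mem_insert, Finset.mem_singleton] at hp hq
  intro h
  rcases hp with rfl | rfl <;> rcases hq with rfl | rfl <;> omega

lemma neighbor_char (f : ℤ × ℤ → ℤ) (z : ℤ × ℤ) (i : Bool) (T' : (ℤ × ℤ) × Bool)
    (h : chainAdj f (z, i) T') :
    (T' = (z - basicVec (!i), !i) ∧ f z ≠ f (z + basicVec i)) ∨
    (T' = (z + basicVec i, !i) ∧ f (z + basicVec i) ≠ f (z + basicVec i + basicVec (!i))) ∨
    (T' = (z, !i) ∧ f z ≠ f (z + basicVec i + basicVec (!i))) := by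
  obtain ⟨hne, s, hcard, hsT, hsT', hneg, hpos⟩ := h
  obtain ⟨z', i'⟩ := T'
  rcases face_cases z i s hcard hsT with rfl | rfl | rfl
  · -- face {z, z + e_i}
    left
    refine ⟨?_, gate_ne hneg hpos⟩
    have h1 : z ∈ triVerts z' i' := hsT' (by simp)
    have h2 : z + basicVec i ∈ triVerts z' i' := hsT' (by simp)
    cases i
    · rcases edgeH z' i' z h1 (by simpa [basicVec] using h2) with heq | heq
      · exact absurd heq.symm (by simpa using hne)
      · simpa [basicVec] using heq
    · rcases edgeV z' i' z h1 (by simpa [basicVec] using h2) with heq | heq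
      · exact absurd heq.symm (by simpa using hne)
      · simpa [basicVec] using heq
  · -- face {z + e_i, z + e_i + e_!i}
    right; left
    refine ⟨?_, gate_ne hneg hpos⟩
    have h1 : z + basicVec i ∈ triVerts z' i' := hsT' (by simp)
    have h2 : z + basicVec i + basicVec (!i) ∈ triVerts z' i' := hsT' (by simp)
    cases i
    · rcases edgeV z' i' (z + basicVec false) h1 (by simpa [basicVec] using h2) with heq | heq
      · simpa [basicVec] using heq
      · exfalso
        apply hne
        have : z + basicVec false - (1, 0) = z := by simp [basicVec]
        rw [this] at heq
        exact heq.symm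
    · rcases edgeH z' i' (z + basicVec true) h1 (by simpa [basicVec] using h2) with heq | heq
      · simpa [basicVec] using heq
      · exfalso
        apply hne
        have : z + basicVec true - (0, 1) = z := by simp [basicVec]
        rw [this] at heq
        exact heq.symm
  · -- face {z, z + e_i + e_!i}
    right; right
    refine ⟨?_, gate_ne hneg hpos⟩
    have h1 : z ∈ triVerts z' i' := hsT' (by simp)
    have h2 : z + basicVec i + basicVec (!i) ∈ triVerts z' i' := hsT' (by simp)
    have h2' : z + (1, 1) ∈ triVerts z' i' := by
      cases i <;> simpa [basicVec, add_assoc] using h2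
    cases i
    · rcases edgeD z' i' z h1 h2' with heq | heq
      · exact absurd heq.symm (by simpa using hne)
      · simpa using heq
    · rcases edgeD z' i' z h1 h2' with heq | heq
      · simpa using heq
      · exact absurd heq.symm (by simpa using hne)

/-- In the chain graph on the triangles of the triangulation of `D²(k)`
associated with a coloring `f`, every triangle has degree at most `2`. -/
theorem chain_graph_degree_le_two (k : ℤ)
    (f : ℤ × ℤ → ℤ) (hf : ∀ p, f p = -1 ∨ f p = 1)
    (T : (ℤ × ℤ) × Bool) (hT : validTri k T.1 T.2) :
    {T' : (ℤ × ℤ) × Bool | validTri k T'.1 T'.2 ∧ chainAdj f T T'}.ncard ≤ 2 := by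
  obtain ⟨z, i⟩ := T
  have pair_le : ∀ x y : (ℤ × ℤ) × Bool,
      ({T' : (ℤ × ℤ) × Bool | validTri k T'.1 T'.2 ∧ chainAdj f (z, i) T'} ⊆ {x, y}) →
      {T' : (ℤ × ℤ) × Bool | validTri k T'.1 T'.2 ∧ chainAdj f (z, i) T'}.ncard ≤ 2 := by
    intro x y hsub
    calc {T' : (ℤ × ℤ) × Bool | validTri k T'.1 T'.2 ∧ chainAdj f (z, i) T'}.ncard
        ≤ ({x, y} : Set ((ℤ × ℤ) × Bool)).ncard :=
          Set.ncard_le_ncard hsub ((Set.finite_singleton y).insert x)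
      _ ≤ ({y} : Set ((ℤ × ℤ) × Bool)).ncard + 1 := Set.ncard_insert_le _ _
      _ ≤ 2 := by rw [Set.ncard_singleton]
  by_cases h1 : f z = f (z + basicVec i)
  · apply pair_le (z + basicVec i, !i) (z, !i)
    rintro T' ⟨-, hadj⟩
    rcases neighbor_char f z i T' hadj with ⟨_, hc⟩ | ⟨rfl, _⟩ | ⟨rfl, _⟩
    · exact absurd h1 hc
    · simp
    · simp
  · by_cases h2 : f (z + basicVec i) = f (z + basicVec i + basicVec (!i))
    · apply pair_le (z - basicVec (!i), !i) (z, !i)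
      rintro T' ⟨-, hadj⟩
      rcases neighbor_char f z i T' hadj with ⟨rfl, _⟩ | ⟨_, hc⟩ | ⟨rfl, _⟩
      · simp
      · exact absurd h2 hc
      · simp
    · apply pair_le (z - basicVec (!i), !i) (z + basicVec i, !i)
      rintro T' ⟨-, hadj⟩
      have h3 : f z = f (z + basicVec i + basicVec (!i)) := by
        rcases hf z with ha | ha <;> rcases hf (z + basicVec i) with hb | hb <;>
          rcases hf (z + basicVec i + basicVec (!i)) with hc | hc <;> omega
      rcases neighbor_char f z i T' hadj with ⟨rfl, _⟩ | ⟨rfl, _⟩ | ⟨_, hc⟩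
      · simp
      · simp
      · exact absurd h3 hc
end
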